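/- Let t > 0, k ≥ 1 and φ(z) = exp(t(z + z⁻¹)). If Y and Ỹ are both solutions of the Riemann–Hilbert problem — i.e. each is a 2×2 matrix-valued function analytic in {|z|<1} and in {|z|>1}, extending continuously to the closed unit disc and to the closed exterior respectively, whose boundary values satisfy Y₊(z) = Y₋(z)·[[1, z^{−k}φ(z)],[0,1]] for |z| = 1, and Y(z)·diag(z^{−k}, z^{k}) → I as z → ∞ — then Y(z) = Ỹ(z) for all z with |z| ≠ 1. -/

import Mathlib

open Filter Topology

/-- The Riemann–Hilbert problem \eqref{e-rhp} for the weight `φ(z) = exp(t(z+z⁻¹))`: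
`Y` is a `2×2` matrix-valued function, analytic in `{|z|<1}` and in `{|z|>1}`,
extending continuously to the closed unit disc and to the closed exterior respectively
(the extensions being `Yp`, `Ym`), whose boundary values satisfy the jump relation
`Y₊(z) = Y₋(z)·[[1, z^{−k}φ(z)],[0,1]]` on `|z| = 1`, and such that
`Y(z)·diag(z^{−k}, z^{k}) → I` as `z → ∞`. -/
def IsRHPSolution (t : ℝ) (k : ℕ) (Y : ℂ → Matrix (Fin 2) (Fin 2) ℂ) : Prop :=
  (∀ i j : Fin 2, DifferentiableOn ℂ (fun z => Y z i j) {z : ℂ | ‖z‖ < 1} ∧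
      DifferentiableOn ℂ (fun z => Y z i j) {z : ℂ | 1 < ‖z‖}) ∧
  (∃ Yp Ym : ℂ → Matrix (Fin 2) (Fin 2) ℂ,
      ContinuousOn Yp {z : ℂ | ‖z‖ ≤ 1} ∧ ContinuousOn Ym {z : ℂ | 1 ≤ ‖z‖} ∧
      (∀ z : ℂ, ‖z‖ < 1 → Yp z = Y z) ∧ (∀ z : ℂ, 1 < ‖z‖ → Ym z = Y z) ∧
      (∀ z : ℂ, ‖z‖ = 1 →
        Yp z = Ym z * !![1, z ^ (-(k : ℤ)) * Complex.exp (t * (z + z⁻¹)); 0, 1])) ∧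
  Tendsto (fun z : ℂ => Y z * Matrix.diagonal ![z ^ (-(k : ℤ)), z ^ (k : ℤ)])
    (Filter.comap norm atTop) (𝓝 1)

section Aux

open Metric

private lemma entry_cont {A : ℂ → Matrix (Fin 2) (Fin 2) ℂ} {s : Set ℂ}
    (h : ContinuousOn A s) (i j : Fin 2) : ContinuousOn (fun z => A z i j) s := by
  have h1 : ContinuousOn (fun z => A z i) s := (continuous_apply i).comp_continuousOn h
  exact (continuous_apply j).comp_continuousOn h1

private lemma mul_adj_entry_diff {A B : ℂ → Matrix (Fin 2) (Fin 2) ℂ} {s : Set ℂ}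
    (hA : ∀ i j : Fin 2, DifferentiableOn ℂ (fun z => A z i j) s)
    (hB : ∀ i j : Fin 2, DifferentiableOn ℂ (fun z => B z i j) s) (i j : Fin 2) :
    DifferentiableOn ℂ (fun z => (A z * (B z).adjugate) i j) s := by
  simp only [Matrix.adjugate_fin_two, Matrix.mul_apply, Fin.sum_univ_two]
  fin_cases j <;> fin_cases i <;>
    simp only [Matrix.cons_val', Matrix.cons_val_zero, Matrix.cons_val_one, Matrix.head_cons,
      Matrix.empty_val', Matrix.cons_val_fin_one, Fin.isValue] <;>
    first
      | exact ((hA _ _).mul (hB _ _)).add ((hA _ _).mul ((hB _ _).neg))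
      | exact ((hA _ _).mul ((hB _ _).neg)).add ((hA _ _).mul (hB _ _))

private lemma mul_adj_entry_cont {A B : ℂ → Matrix (Fin 2) (Fin 2) ℂ} {s : Set ℂ}
    (hA : ContinuousOn A s) (hB : ContinuousOn B s) (i j : Fin 2) :
    ContinuousOn (fun z => (A z * (B z).adjugate) i j) s := by
  have hA' : ∀ i j : Fin 2, ContinuousOn (fun z => A z i j) s := fun i j => entry_cont hA i j
  have hB' : ∀ i j : Fin 2, ContinuousOn (fun z => B z i j) s := fun i j => entry_cont hB i j
  simp only [Matrix.adjugate_fin_two, Matrix.mul_apply, Fin.sum_univ_two]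
  fin_cases j <;> fin_cases i <;>
    simp only [Matrix.cons_val', Matrix.cons_val_zero, Matrix.cons_val_one, Matrix.head_cons,
      Matrix.empty_val', Matrix.cons_val_fin_one, Fin.isValue]
  · exact ((hA' _ _).mul (hB' _ _)).add ((hA' _ _).mul ((hB' _ _).neg))
  · exact ((hA' _ _).mul (hB' _ _)).add ((hA' _ _).mul ((hB' _ _).neg))
  · exact ((hA' _ _).mul ((hB' _ _).neg)).add ((hA' _ _).mul (hB' _ _))
  · exact ((hA' _ _).mul ((hB' _ _).neg)).add ((hA' _ _).mul (hB' _ _))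

/-- Key analytic lemma: if `fp` is holomorphic in the open unit disc and continuous on the
closed disc, `fm` is holomorphic outside and continuous on the closed exterior, the two agree
on the unit circle, and `fm → c` at infinity, then both are identically `c`. -/
private lemma glue_const (fp fm : ℂ → ℂ) (c : ℂ)
    (hpd : DifferentiableOn ℂ fp {z : ℂ | ‖z‖ < 1})
    (hpc : ContinuousOn fp {z : ℂ | ‖z‖ ≤ 1})
    (hmd : DifferentiableOn ℂ fm {z : ℂ | 1 < ‖z‖})
    (hmc : ContinuousOn fm {z : ℂ | 1 ≤ ‖z‖})
    (heq : ∀ z : ℂ, ‖z‖ = 1 → fp z = fm z)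
    (hlim : Tendsto fm (Filter.comap norm atTop) (𝓝 c)) :
    (∀ z : ℂ, ‖z‖ ≤ 1 → fp z = c) ∧ (∀ z : ℂ, 1 ≤ ‖z‖ → fm z = c) := by
  have hball : Metric.ball (0:ℂ) 1 = {z : ℂ | ‖z‖ < 1} := by
    ext z; simp [mem_ball_zero_iff]
  have hcball : Metric.closedBall (0:ℂ) 1 = {z : ℂ | ‖z‖ ≤ 1} := by
    ext z; simp [mem_closedBall_zero_iff]
  have hopen : IsOpen {z : ℂ | 1 < ‖z‖} := isOpen_lt continuous_const continuous_norm
  have h2pi : (2 * (Real.pi : ℂ) * Complex.I) ≠ 0 :=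
    mul_ne_zero (mul_ne_zero two_ne_zero (Complex.ofReal_ne_zero.mpr Real.pi_ne_zero))
      Complex.I_ne_zero
  -- Step 1 : `fp = c` on the open disc.
  have step1 : ∀ w : ℂ, ‖w‖ < 1 → fp w = c := by
    intro w hw
    have hwmem : w ∈ ball (0:ℂ) 1 := by simpa [mem_ball_zero_iff] using hw
    have hdc : DiffContOnCl ℂ fp (ball (0:ℂ) 1) := by
      refine ⟨hball ▸ hpd, ?_⟩
      rw [closure_ball (0:ℂ) one_ne_zero, hcball]; exact hpc
    have hCauchy := hdc.circleIntegral_sub_inv_smul hwmem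
    have hcongr : (∮ z in C(0, 1), (z - w)⁻¹ • fp z) = ∮ z in C(0, 1), (z - w)⁻¹ • fm z := by
      refine circleIntegral.integral_congr zero_le_one fun z hz => ?_
      rw [heq z (by simpa [mem_sphere_zero_iff_norm] using hz)]
    have hannulus : ∀ R : ℝ, 1 ≤ R →
        (∮ z in C(0, R), (z - w)⁻¹ • fm z) = ∮ z in C(0, 1), (z - w)⁻¹ • fm z := by
      intro R hR
      refine Complex.circleIntegral_eq_of_differentiable_on_annulus_off_countable one_pos hR
        Set.countable_empty ?_ ?_
      · refine ContinuousOn.fun_smul ?_ (hmc.mono ?_)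
        · refine ContinuousOn.inv₀ ((continuous_id.sub continuous_const).continuousOn) ?_
          rintro z ⟨-, hz2⟩
          have hz1 : 1 ≤ ‖z‖ := by
            by_contra h
            exact hz2 (by simpa [mem_ball_zero_iff] using lt_of_not_ge h)
          exact sub_ne_zero.2 (by rintro rfl; exact absurd hz1 (not_le.2 hw))
        · rintro z ⟨-, hz2⟩
          by_contra h
          exact hz2 (by simpa [mem_ball_zero_iff] using lt_of_not_ge h)
      · rintro z ⟨⟨hz1, hz2⟩, -⟩
        have hz1' : 1 < ‖z‖ := by simpa [mem_closedBall_zero_iff] using hz2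
        have hzw : z - w ≠ 0 :=
          sub_ne_zero.2 (by rintro rfl; exact absurd hz1' (not_lt.2 hw.le))
        exact ((differentiableAt_id.sub (differentiableAt_const w)).inv hzw).smul
          (hmd.differentiableAt (hopen.mem_nhds hz1'))
    have hIval : (∮ z in C(0, 1), (z - w)⁻¹ • fm z) = (2 * (Real.pi : ℂ) * Complex.I) • c := by
      have key : ∀ ε : ℝ, 0 < ε →
          ‖(∮ z in C(0, 1), (z - w)⁻¹ • fm z) - (2 * (Real.pi : ℂ) * Complex.I) • c‖ ≤ ε := by
        intro ε hε
        have hπ := Real.pi_pos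
        have hε' : 0 < ε / (4 * Real.pi + 1) := div_pos hε (by positivity)
        obtain ⟨s, hs, hsubs⟩ := Filter.mem_comap.mp (hlim (Metric.closedBall_mem_nhds c hε'))
        obtain ⟨B, hB⟩ := Filter.mem_atTop_sets.mp hs
        set ε' : ℝ := ε / (4 * Real.pi + 1)
        set R : ℝ := max (max B (2 * ‖w‖ + 2)) 1 with hRdef
        have hR1 : 1 ≤ R := le_max_right _ _
        have hRw : 2 * ‖w‖ + 2 ≤ R := le_trans (le_max_right _ _) (le_max_left _ _)
        have hRB : B ≤ R := le_trans (le_max_left _ _) (le_max_left _ _)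
        have hR0 : (0:ℝ) < R := lt_of_lt_of_le one_pos hR1
        have hwR : w ∈ ball (0:ℂ) R := by
          rw [mem_ball_zero_iff]; nlinarith [norm_nonneg w]
        have hsphere : ∀ z : ℂ, z ∈ sphere (0:ℂ) R → 1 ≤ ‖z‖ ∧ z - w ≠ 0 := by
          intro z hz
          have hzR : ‖z‖ = R := by simpa [mem_sphere_zero_iff_norm] using hz
          refine ⟨by rw [hzR]; exact hR1, sub_ne_zero.2 ?_⟩
          rintro rfl
          rw [hzR] at hw
          exact absurd hR1 (not_le.2 hw)
        have hcont1 : ContinuousOn (fun z : ℂ => (z - w)⁻¹ • (fm z - c)) (sphere (0:ℂ) R) := by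
          refine ContinuousOn.fun_smul ?_ ((hmc.mono ?_).sub continuousOn_const)
          · exact ContinuousOn.inv₀ ((continuous_id.sub continuous_const).continuousOn)
              fun z hz => (hsphere z hz).2
          · exact fun z hz => (hsphere z hz).1
        have hcont2 : ContinuousOn (fun z : ℂ => (z - w)⁻¹ • c) (sphere (0:ℂ) R) :=
          ContinuousOn.smul (ContinuousOn.inv₀
            ((continuous_id.sub continuous_const).continuousOn)
            fun z hz => (hsphere z hz).2) continuousOn_const
        have hint1 : CircleIntegrable (fun z : ℂ => (z - w)⁻¹ • (fm z - c)) 0 R :=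
          ContinuousOn.circleIntegrable hR0.le hcont1
        have hint2 : CircleIntegrable (fun z : ℂ => (z - w)⁻¹ • c) 0 R :=
          ContinuousOn.circleIntegrable hR0.le hcont2
        have hcontA : ContinuousOn (fun z : ℂ => (z - w)⁻¹ • fm z) (sphere (0:ℂ) R) := by
          refine ContinuousOn.fun_smul ?_ (hmc.mono fun z hz => (hsphere z hz).1)
          exact ContinuousOn.inv₀ ((continuous_id.sub continuous_const).continuousOn)
            fun z hz => (hsphere z hz).2
        have hintA : CircleIntegrable (fun z : ℂ => (z - w)⁻¹ • fm z) 0 R :=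
          ContinuousOn.circleIntegrable hR0.le hcontA
        have hsplit : (∮ z in C(0, R), (z - w)⁻¹ • (fm z - c))
            = (∮ z in C(0, R), (z - w)⁻¹ • fm z) - ∮ z in C(0, R), (z - w)⁻¹ • c := by
          rw [← circleIntegral.integral_sub hintA hint2]
          exact circleIntegral.integral_congr hR0.le fun z hz => smul_sub _ _ _
        have hconst : (∮ z in C(0, R), (z - w)⁻¹ • c)
            = (2 * (Real.pi : ℂ) * Complex.I) • c := by
          rw [circleIntegral.integral_smul_const,
            circleIntegral.integral_sub_inv_of_mem_ball hwR]
        have hbound : ‖∮ z in C(0, R), (z - w)⁻¹ • (fm z - c)‖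
            ≤ 2 * Real.pi * R * ((2 / R) * ε') := by
          refine circleIntegral.norm_integral_le_of_norm_le_const hR0.le fun z hz => ?_
          have hzR : ‖z‖ = R := by simpa [mem_sphere_zero_iff_norm] using hz
          have hzB : ‖fm z - c‖ ≤ ε' := by
            have h1 : ‖z‖ ∈ s := hB _ (by rw [hzR]; exact hRB)
            have h2 : z ∈ fm ⁻¹' Metric.closedBall c ε' := hsubs h1
            simpa [Metric.mem_closedBall, dist_eq_norm] using h2
          have hzw : R - ‖w‖ ≤ ‖z - w‖ := by
            have h3 := norm_sub_norm_le z w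
            rw [hzR] at h3
            linarith
          have hpos : (0:ℝ) < R - ‖w‖ := by nlinarith [norm_nonneg w]
          rw [norm_smul, norm_inv]
          have h1 : ‖z - w‖⁻¹ ≤ (R - ‖w‖)⁻¹ := inv_anti₀ hpos hzw
          have h2 : (R - ‖w‖)⁻¹ ≤ 2 / R := by
            have h4 : R / 2 ≤ R - ‖w‖ := by nlinarith [norm_nonneg w]
            have h5 : (R - ‖w‖)⁻¹ ≤ (R / 2)⁻¹ := inv_anti₀ (by positivity) h4
            rwa [inv_div] at h5
          exact mul_le_mul (h1.trans h2) hzB (norm_nonneg _) (by positivity)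
        have hfin : (∮ z in C(0, 1), (z - w)⁻¹ • fm z)
            - (2 * (Real.pi : ℂ) * Complex.I) • c
            = ∮ z in C(0, R), (z - w)⁻¹ • (fm z - c) := by
          rw [← hannulus R hR1, ← hconst, ← hsplit]
        rw [hfin]
        refine hbound.trans ?_
        have heqv : 2 * Real.pi * R * (2 / R * ε') = 4 * Real.pi * ε' := by
          field_simp
          ring
        rw [heqv]
        have h4 : (0:ℝ) < 4 * Real.pi + 1 := by positivity
        rw [show (4 : ℝ) * Real.pi * ε' = 4 * Real.pi * ε / (4 * Real.pi + 1) by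
          rw [mul_div_assoc]]
        rw [div_le_iff₀ h4]
        nlinarith
      by_contra hne
      have hpos : 0 < ‖(∮ z in C(0, 1), (z - w)⁻¹ • fm z)
          - (2 * (Real.pi : ℂ) * Complex.I) • c‖ := by
        rw [norm_pos_iff, sub_ne_zero]
        exact hne
      have := key (‖(∮ z in C(0, 1), (z - w)⁻¹ • fm z)
          - (2 * (Real.pi : ℂ) * Complex.I) • c‖ / 2) (by positivity)
      linarith
    have : (2 * (Real.pi : ℂ) * Complex.I) • fp w = (2 * (Real.pi : ℂ) * Complex.I) • c := by
      rw [← hCauchy, hcongr, hIval]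
    simp only [smul_eq_mul] at this
    exact mul_left_cancel₀ h2pi this
  -- Step 2 : `fp = c` on the closed disc.
  have step2 : ∀ z : ℂ, ‖z‖ ≤ 1 → fp z = c := by
    intro z hz
    rcases lt_or_eq_of_le hz with h | h
    · exact step1 z h
    · have hzc : z ∈ closure (ball (0:ℂ) 1) := by
        rw [closure_ball (0:ℂ) one_ne_zero, mem_closedBall_zero_iff]; exact hz
      have hne : (𝓝[ball (0:ℂ) 1] z).NeBot := mem_closure_iff_nhdsWithin_neBot.mp hzc
      have h1 : Tendsto fp (𝓝[ball (0:ℂ) 1] z) (𝓝 (fp z)) := by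
        refine (hpc z hz).mono ?_
        rw [← hcball]; exact ball_subset_closedBall
      have h2 : Tendsto fp (𝓝[ball (0:ℂ) 1] z) (𝓝 c) := by
        refine Tendsto.congr' ?_ tendsto_const_nhds
        filter_upwards [self_mem_nhdsWithin] with x hx
        exact (step1 x (by simpa [mem_ball_zero_iff] using hx)).symm
      exact tendsto_nhds_unique h1 h2
  -- Step 3 : `fm = c` on the circle.
  have step3 : ∀ z : ℂ, ‖z‖ = 1 → fm z = c := fun z hz =>
    (heq z hz).symm.trans (step2 z hz.le)
  -- Step 4 : `fm = c` outside, via inversion and the maximum principle.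
  refine ⟨step2, ?_⟩
  set g : ℂ → ℂ := fun u => fm u⁻¹ with hgdef
  have hginv : Tendsto (fun u : ℂ => u⁻¹) (𝓝[≠] (0:ℂ)) (Filter.comap norm atTop) := by
    rw [Filter.tendsto_comap_iff]
    exact tendsto_norm_inv_nhdsNE_zero_atTop
  have hgtend : Tendsto g (𝓝[≠] (0:ℂ)) (𝓝 c) := hlim.comp hginv
  have hgd : DifferentiableOn ℂ g (ball (0:ℂ) 1 \ {0}) := by
    intro u hu
    have hu0 : u ≠ 0 := hu.2
    have hu1 : ‖u‖ < 1 := by simpa [mem_ball_zero_iff] using hu.1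
    have hui : 1 < ‖u⁻¹‖ := by
      rw [norm_inv]
      exact (one_lt_inv₀ (norm_pos_iff.mpr hu0)).mpr hu1
    exact ((hmd.differentiableAt (hopen.mem_nhds hui)).comp u
      (differentiableAt_inv hu0)).differentiableWithinAt
  have hbdd : IsBoundedUnder (· ≤ ·) (𝓝[≠] (0:ℂ)) (norm ∘ fun u => g u - g 0) :=
    ((hgtend.sub tendsto_const_nhds).norm).isBoundedUnder_le
  have hG : DifferentiableOn ℂ (Function.update g 0 c) (ball (0:ℂ) 1) := by
    have h := Complex.differentiableOn_update_limUnder_of_isLittleO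
      (ball_mem_nhds (0:ℂ) one_pos) hgd hbdd.isLittleO_sub_self_inv
    rwa [hgtend.limUnder_eq] at h
  set G : ℂ → ℂ := Function.update g 0 c with hGdef
  have hGcont : ContinuousOn G (Metric.closedBall (0:ℂ) 1) := by
    intro u hu
    by_cases hu0 : u = 0
    · subst hu0
      exact ((hG.differentiableAt (ball_mem_nhds _ one_pos)).continuousAt).continuousWithinAt
    · have hu1 : ‖u‖ ≤ 1 := by simpa [mem_closedBall_zero_iff] using hu
      have hupos : (0:ℝ) < ‖u‖ := norm_pos_iff.mpr hu0
      have hmain : ContinuousWithinAt fm {z : ℂ | 1 ≤ ‖z‖} u⁻¹ := by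
        refine hmc u⁻¹ ?_
        simp only [Set.mem_setOf_eq, norm_inv]
        exact (one_le_inv₀ hupos).mpr hu1
      have h1 : ContinuousWithinAt g (Metric.closedBall (0:ℂ) 1 ∩ {(0:ℂ)}ᶜ) u := by
        refine ContinuousWithinAt.comp hmain
          ((continuousAt_inv₀ hu0).continuousWithinAt) ?_
        intro x hx
        have hx0 : x ≠ 0 := hx.2
        have hx1 : ‖x‖ ≤ 1 := by simpa [mem_closedBall_zero_iff] using hx.1
        simp only [Set.mem_setOf_eq, norm_inv]
        exact (one_le_inv₀ (norm_pos_iff.mpr hx0)).mpr hx1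
      have hcg : ContinuousWithinAt g (Metric.closedBall (0:ℂ) 1) u :=
        (continuousWithinAt_inter (isOpen_compl_singleton.mem_nhds hu0)).mp h1
      have hev : G =ᶠ[𝓝[Metric.closedBall (0:ℂ) 1] u] g := by
        filter_upwards [mem_nhdsWithin_of_mem_nhds (isOpen_compl_singleton.mem_nhds hu0)]
          with x hx
        exact Function.update_of_ne hx _ _
      exact hcg.congr_of_eventuallyEq hev (Function.update_of_ne hu0 _ _)
  have hmax : ∀ u ∈ Metric.closedBall (0:ℂ) 1, G u = c := by
    intro u hu
    have hcl : u ∈ closure (ball (0:ℂ) 1) := by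
      rwa [closure_ball (0:ℂ) one_ne_zero]
    have hdcc : DiffContOnCl ℂ (fun u => G u - c) (ball (0:ℂ) 1) := by
      refine ⟨hG.sub (differentiableOn_const _), ?_⟩
      rw [closure_ball (0:ℂ) one_ne_zero]
      exact hGcont.sub continuousOn_const
    have hfr : ∀ ζ ∈ frontier (ball (0:ℂ) 1), ‖G ζ - c‖ ≤ 0 := by
      intro ζ hζ
      rw [frontier_ball (0:ℂ) one_ne_zero] at hζ
      have hζ1 : ‖ζ‖ = 1 := by simpa [mem_sphere_zero_iff_norm] using hζ
      have hζ0 : ζ ≠ 0 := by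
        intro h; rw [h] at hζ1; simp at hζ1
      have : G ζ = c := by
        rw [hGdef, Function.update_of_ne hζ0, hgdef]
        exact step3 ζ⁻¹ (by rw [norm_inv, hζ1]; norm_num)
      rw [this]; simp
    have := Complex.norm_le_of_forall_mem_frontier_norm_le isBounded_ball hdcc hfr hcl
    have h0 : G u - c = 0 := by
      rw [← norm_le_zero_iff]; exact this
    exact sub_eq_zero.mp h0
  intro z hz
  rcases eq_or_lt_of_le hz with h | h
  · exact step3 z h.symm
  · have hz0 : z ≠ 0 := by
      intro h0; rw [h0] at h; simp at h; linarith
    have hmem : z⁻¹ ∈ Metric.closedBall (0:ℂ) 1 := by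
      rw [mem_closedBall_zero_iff, norm_inv]
      exact (inv_le_one_of_one_le₀ h.le)
    have := hmax z⁻¹ hmem
    rw [hGdef, Function.update_of_ne (inv_ne_zero hz0), hgdef] at this
    simpa [inv_inv] using this

end Aux

set_option maxHeartbeats 1600000 in
/-- Let `t > 0`, `k ≥ 1` and `φ(z) = exp(t(z + z⁻¹))`.  If `Y` and `Ỹ` are both
solutions of the Riemann–Hilbert problem, then `Y(z) = Ỹ(z)` for all `z` with `|z| ≠ 1`. -/
theorem rhp_solution_unique (t : ℝ) (ht : 0 < t) (k : ℕ) (hk : 1 ≤ k)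
    (Y Y' : ℂ → Matrix (Fin 2) (Fin 2) ℂ)
    (hY : IsRHPSolution t k Y) (hY' : IsRHPSolution t k Y') :
    ∀ z : ℂ, ‖z‖ ≠ 1 → Y z = Y' z := by
  obtain ⟨hYdiff, ⟨Yp, Ym, hYpc, hYmc, hYpe, hYme, hjump⟩, hYlim⟩ := hY
  obtain ⟨hY'diff, ⟨Yp', Ym', hYp'c, hYm'c, hYp'e, hYm'e, hjump'⟩, hY'lim⟩ := hY'
  set J : ℂ → Matrix (Fin 2) (Fin 2) ℂ :=
    fun z => !![1, z ^ (-(k : ℤ)) * Complex.exp (t * (z + z⁻¹)); 0, 1] with hJdef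
  set D : ℂ → Matrix (Fin 2) (Fin 2) ℂ :=
    fun z => Matrix.diagonal ![z ^ (-(k : ℤ)), z ^ (k : ℤ)] with hDdef
  have hdetJ : ∀ z : ℂ, (J z).det = 1 := by
    intro z; simp [hJdef, Matrix.det_fin_two_of]
  have hdetD : ∀ z : ℂ, z ≠ 0 → (D z).det = 1 := by
    intro z hz
    rw [hDdef]
    simp only [Matrix.det_diagonal, Fin.prod_univ_two, Matrix.cons_val_zero,
      Matrix.cons_val_one, Matrix.head_cons]
    rw [← zpow_add₀ hz]
    simp
  have hFm : {z : ℂ | 1 < ‖z‖} ∈ Filter.comap norm Filter.atTop :=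
    Filter.preimage_mem_comap (Ioi_mem_atTop 1)
  -- entries of the boundary extensions are differentiable inside/outside
  have epd' : ∀ i j : Fin 2, DifferentiableOn ℂ (fun z => Yp' z i j) {z : ℂ | ‖z‖ < 1} :=
    fun i j => ((hY'diff i j).1).congr fun x hx => by rw [hYp'e x hx]
  have emd' : ∀ i j : Fin 2, DifferentiableOn ℂ (fun z => Ym' z i j) {z : ℂ | 1 < ‖z‖} :=
    fun i j => ((hY'diff i j).2).congr fun x hx => by rw [hYm'e x hx]
  have epd : ∀ i j : Fin 2, DifferentiableOn ℂ (fun z => Yp z i j) {z : ℂ | ‖z‖ < 1} :=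
    fun i j => ((hYdiff i j).1).congr fun x hx => by rw [hYpe x hx]
  have emd : ∀ i j : Fin 2, DifferentiableOn ℂ (fun z => Ym z i j) {z : ℂ | 1 < ‖z‖} :=
    fun i j => ((hYdiff i j).2).congr fun x hx => by rw [hYme x hx]
  -- Part A : `det Y' ≡ 1`
  have hdet : (∀ z : ℂ, ‖z‖ ≤ 1 → (Yp' z).det = 1) ∧ (∀ z : ℂ, 1 ≤ ‖z‖ → (Ym' z).det = 1) := by
    refine glue_const (fun z => (Yp' z).det) (fun z => (Ym' z).det) 1 ?_ ?_ ?_ ?_ ?_ ?_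
    · have : ∀ z : ℂ, (Yp' z).det =
          Yp' z 0 0 * Yp' z 1 1 - Yp' z 0 1 * Yp' z 1 0 := fun z => Matrix.det_fin_two _
      simp only [this]
      exact ((epd' 0 0).mul (epd' 1 1)).sub ((epd' 0 1).mul (epd' 1 0))
    · exact continuous_id.matrix_det.comp_continuousOn hYp'c
    · have : ∀ z : ℂ, (Ym' z).det =
          Ym' z 0 0 * Ym' z 1 1 - Ym' z 0 1 * Ym' z 1 0 := fun z => Matrix.det_fin_two _
      simp only [this]
      exact ((emd' 0 0).mul (emd' 1 1)).sub ((emd' 0 1).mul (emd' 1 0))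
    · exact continuous_id.matrix_det.comp_continuousOn hYm'c
    · intro z hz
      show (Yp' z).det = (Ym' z).det
      rw [hjump' z hz, Matrix.det_mul, hdetJ, mul_one]
    · have h1 : Tendsto (fun z : ℂ => (Y' z * D z).det) (Filter.comap norm Filter.atTop)
          (𝓝 1) := by
        have h2 := (continuous_id.matrix_det.tendsto (1 : Matrix (Fin 2) (Fin 2) ℂ)).comp hY'lim
        simp only [Function.comp_def, id_eq, Matrix.det_one] at h2
        exact h2
      refine Tendsto.congr' ?_ h1
      filter_upwards [hFm] with z hz
      have hz0 : z ≠ 0 := by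
        intro h0; rw [h0] at hz; simp only [Set.mem_setOf_eq, norm_zero] at hz; linarith
      show (Y' z * D z).det = (Ym' z).det
      rw [Matrix.det_mul, hdetD z hz0, mul_one, hYm'e z hz]
  -- Part B : `Y * adjugate Y' ≡ 1`
  have hNjump : ∀ z : ℂ, ‖z‖ = 1 →
      Yp z * (Yp' z).adjugate = Ym z * (Ym' z).adjugate := by
    intro z hz
    rw [hjump z hz, hjump' z hz, Matrix.adjugate_mul_distrib, mul_assoc,
      ← mul_assoc (J z), Matrix.mul_adjugate, hdetJ, one_smul, one_mul]
  have hNlim : Tendsto (fun z : ℂ => Y z * (Y' z).adjugate)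
      (Filter.comap norm Filter.atTop) (𝓝 1) := by
    have hcontadj : Continuous fun M : Matrix (Fin 2) (Fin 2) ℂ => M.adjugate := by
      have he : ∀ i j : Fin 2, Continuous fun M : Matrix (Fin 2) (Fin 2) ℂ => M i j :=
        fun i j => (continuous_apply j).comp (continuous_apply i)
      refine continuous_matrix fun i j => ?_
      simp only [Matrix.adjugate_fin_two]
      fin_cases i <;> fin_cases j <;>
        simp only [Matrix.cons_val', Matrix.cons_val_zero, Matrix.cons_val_one, Matrix.head_cons,
          Matrix.empty_val', Matrix.cons_val_fin_one, Fin.isValue]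
      · exact he 1 1
      · exact (he 0 1).neg
      · exact (he 1 0).neg
      · exact he 0 0
    have hadj : Tendsto (fun z : ℂ => (Y' z * D z).adjugate)
        (Filter.comap norm Filter.atTop) (𝓝 1) := by
      have h2 := (hcontadj.tendsto (1 : Matrix (Fin 2) (Fin 2) ℂ)).comp hY'lim
      simp only [Function.comp_def, Matrix.adjugate_one] at h2
      exact h2
    have h1 : Tendsto (fun z : ℂ => (Y z * D z) * (Y' z * D z).adjugate)
        (Filter.comap norm Filter.atTop) (𝓝 1) := by
      have h3 := hYlim.mul hadj
      rw [mul_one] at h3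
      exact h3
    refine Tendsto.congr' ?_ h1
    filter_upwards [hFm] with z hz
    have hz0 : z ≠ 0 := by
      intro h0; rw [h0] at hz; simp only [Set.mem_setOf_eq, norm_zero] at hz; linarith
    show (Y z * D z) * (Y' z * D z).adjugate = Y z * (Y' z).adjugate
    rw [Matrix.adjugate_mul_distrib, mul_assoc, ← mul_assoc (D z), Matrix.mul_adjugate,
      hdetD z hz0, one_smul, one_mul]
  have hN : ∀ i j : Fin 2,
      (∀ z : ℂ, ‖z‖ ≤ 1 → (Yp z * (Yp' z).adjugate) i j = (1 : Matrix (Fin 2) (Fin 2) ℂ) i j) ∧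
      (∀ z : ℂ, 1 ≤ ‖z‖ → (Ym z * (Ym' z).adjugate) i j = (1 : Matrix (Fin 2) (Fin 2) ℂ) i j) := by
    intro i j
    refine glue_const _ _ _ ?_ ?_ ?_ ?_ ?_ ?_
    · exact mul_adj_entry_diff epd epd' i j
    · exact mul_adj_entry_cont hYpc hYp'c i j
    · exact mul_adj_entry_diff emd emd' i j
    · exact mul_adj_entry_cont hYmc hYm'c i j
    · intro z hz
      show (Yp z * (Yp' z).adjugate) i j = (Ym z * (Ym' z).adjugate) i j
      rw [hNjump z hz]
    · have hentry : Tendsto (fun z : ℂ => (Y z * (Y' z).adjugate) i j)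
          (Filter.comap norm Filter.atTop) (𝓝 ((1 : Matrix (Fin 2) (Fin 2) ℂ) i j)) := by
        exact (((continuous_apply j).comp (continuous_apply i)).tendsto
          (1 : Matrix (Fin 2) (Fin 2) ℂ)).comp hNlim
      refine Tendsto.congr' ?_ hentry
      filter_upwards [hFm] with z hz
      show (Y z * (Y' z).adjugate) i j = (Ym z * (Ym' z).adjugate) i j
      rw [hYme z hz, hYm'e z hz]
  -- conclusion
  intro z hz
  rcases lt_or_gt_of_ne hz with h | h
  · have hN1 : Y z * (Y' z).adjugate = 1 := by
      ext i j
      have := (hN i j).1 z h.le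
      rwa [hYpe z h, hYp'e z h] at this
    have hdz : (Y' z).det = 1 := by
      have := hdet.1 z h.le
      rwa [hYp'e z h] at this
    calc Y z = Y z * ((Y' z).adjugate * Y' z) := by
          rw [Matrix.adjugate_mul, hdz, one_smul, mul_one]
      _ = (Y z * (Y' z).adjugate) * Y' z := by rw [mul_assoc]
      _ = 1 * Y' z := by rw [hN1]
      _ = Y' z := one_mul _
  · have hN1 : Y z * (Y' z).adjugate = 1 := by
      ext i j
      have := (hN i j).2 z h.le
      rwa [hYme z h, hYm'e z h] at this
    have hdz : (Y' z).det = 1 := by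
      have := hdet.2 z h.le
      rwa [hYm'e z h] at this
    calc Y z = Y z * ((Y' z).adjugate * Y' z) := by
          rw [Matrix.adjugate_mul, hdz, one_smul, mul_one]
      _ = (Y z * (Y' z).adjugate) * Y' z := by rw [mul_assoc]
      _ = 1 * Y' z := by rw [hN1]
      _ = Y' z := one_mul _
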